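/- For the basis functions χ_i(x) = L_i(x) − L_{i+2}(x), where L_i is the i-th Legendre polynomial, the weighted stiffness integrals a_{ij} = ∫_{−1}^{1} χ_j'(x) χ_i'(x) (x+1) dx satisfy a_{ii} = 4i + 6 and a_{i,i+1} = 2i + 4, and a_{ij} = 0 whenever |i − j| ≥ 2. -/

import Mathlib

/-!
Write `L_n = D^n w_n` with `w_n = (x² - 1)^n / (2^n n!)`. Then `D w_{n+1} = x w_n` and
`D (x w_{n+1}) = (2n+3) w_{n+1} + w_n`; differentiating the latter `n+1` times gives
`L_{n+2}' - L_n' = (2n+3) L_{n+1}`, so `χ_i' = -(2i+3) L_{i+1}` and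
`a_{ij} = (2i+3)(2j+3) ∫ L_{i+1} L_{j+1} (x+1)`.

Since `w_n` vanishes to order `n` at `±1`, integrating by parts `n` times gives
`∫ q L_n = (-1)^n ∫ q^{(n)} w_n`. This yields orthogonality of `L_n` to polynomials of lower
degree (hence `a_{ij} = 0` for `|i - j| ≥ 2`) and, with `(2n+3) ∫ w_{n+1} = -∫ w_n`, the norm
`∫ L_n² = 2/(2n+1)`. What remains is `∫ x L_n² = 0` by parity, and
`∫ x L_{n+1} L_{n+2} = (n+2)/(2n+3) ∫ L_{n+2}²`, where the ratio of leading coefficients is read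
off from the derivative recurrence.
-/

open Polynomial intervalIntegral

/-- The `n`-th Legendre polynomial via Rodrigues' formula. -/
noncomputable def legendre (n : ℕ) : Polynomial ℝ :=
  Polynomial.C ((2 ^ n * n.factorial : ℝ)⁻¹) * Polynomial.derivative^[n] ((X ^ 2 - 1) ^ n)

/-- χ_i = L_i − L_{i+2}. -/
noncomputable def chi (i : ℕ) : Polynomial ℝ := legendre i - legendre (i + 2)

/-- a_{ij} = ∫_{-1}^1 χ_j' χ_i' (x+1) dx. -/
noncomputable def aMat (i j : ℕ) : ℝ :=
  ∫ x in (-1 : ℝ)..1,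
    (Polynomial.derivative (chi j)).eval x * (Polynomial.derivative (chi i)).eval x * (x + 1)

open scoped Nat

namespace Polynomial

variable {R : Type*}

theorem iterate_derivative_eq_C_of_natDegree_le [Semiring R] {p : R[X]} {n : ℕ}
    (hp : p.natDegree ≤ n) : derivative^[n] p = C (n ! * p.coeff n) := by
  have hdeg : (derivative^[n] p).natDegree ≤ 0 :=
    (natDegree_iterate_derivative p n).trans (by omega)
  rw [eq_C_of_natDegree_le_zero hdeg, coeff_iterate_derivative, zero_add,
    Nat.descFactorial_self, nsmul_eq_mul]

variable [CommRing R]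

theorem iterate_derivative_comp_neg_X (p : R[X]) (k : ℕ) :
    derivative^[k] (p.comp (-X)) = (-1) ^ k * (derivative^[k] p).comp (-X) := by
  induction k generalizing p with
  | zero => simp
  | succ k ih => simp [ih (derivative p), derivative_comp, pow_succ]

theorem eval_iterate_derivative_eq_zero_of_pow_dvd {p q : R[X]} {n k : ℕ} {x : R}
    (hpq : p ^ n ∣ q) (hx : p.IsRoot x) (hk : k < n) : (derivative^[k] q).eval x = 0 := by
  obtain ⟨r, hr⟩ := pow_sub_dvd_iterate_derivative_of_pow_dvd k hpq
  rw [hr, eval_mul, eval_pow, hx.eq_zero, zero_pow (by omega), zero_mul]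

end Polynomial

noncomputable def polyIntegral (a b : ℝ) (p : ℝ[X]) : ℝ := ∫ x in a..b, p.eval x

section polyIntegral

variable {a b : ℝ}

theorem polyIntegral_add (p q : ℝ[X]) :
    polyIntegral a b (p + q) = polyIntegral a b p + polyIntegral a b q := by
  simp only [polyIntegral, eval_add]
  exact integral_add (p.continuous.intervalIntegrable a b) (q.continuous.intervalIntegrable a b)

theorem polyIntegral_C_mul (c : ℝ) (p : ℝ[X]) :
    polyIntegral a b (C c * p) = c * polyIntegral a b p := by
  simp [polyIntegral, integral_const_mul]

theorem polyIntegral_mul_X_add_one (p : ℝ[X]) :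
    polyIntegral a b (p * (X + 1)) = polyIntegral a b (X * p) + polyIntegral a b p := by
  rw [mul_add, mul_one, mul_comm, polyIntegral_add]

theorem polyIntegral_derivative (p : ℝ[X]) :
    polyIntegral a b (derivative p) = p.eval b - p.eval a :=
  integral_eq_sub_of_hasDerivAt (fun x _ ↦ p.hasDerivAt x)
    ((derivative p).continuous.intervalIntegrable a b)

theorem polyIntegral_mul_derivative (p q : ℝ[X]) :
    polyIntegral a b (p * derivative q) =
      (p * q).eval b - (p * q).eval a - polyIntegral a b (derivative p * q) := by
  rw [← polyIntegral_derivative, derivative_mul, polyIntegral_add]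
  ring

theorem polyIntegral_mul_iterate_derivative {f : ℝ[X]} {n : ℕ}
    (hf : ∀ k < n, (derivative^[k] f).eval a = 0 ∧ (derivative^[k] f).eval b = 0) (q : ℝ[X]) :
    polyIntegral a b (q * derivative^[n] f) =
      (-1) ^ n * polyIntegral a b (derivative^[n] q * f) := by
  induction n generalizing q with
  | zero => simp
  | succ n ih =>
    obtain ⟨ha, hb⟩ := hf n n.lt_succ_self
    rw [Function.iterate_succ_apply', polyIntegral_mul_derivative, eval_mul, eval_mul, ha, hb,
      ih (fun k hk ↦ hf k (hk.trans n.lt_succ_self)), ← Function.iterate_succ_apply]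
    ring

theorem polyIntegral_neg_eq_zero_of_comp_neg_X {p : ℝ[X]} (hp : p.comp (-X) = -p) (c : ℝ) :
    polyIntegral (-c) c p = 0 := by
  have hodd (x : ℝ) : p.eval (-x) = -p.eval x := by simpa using congrArg (eval x) hp
  have h := integral_comp_neg (a := -c) (b := c) (fun x ↦ p.eval x)
  simp only [neg_neg, hodd, intervalIntegral.integral_neg] at h
  rw [polyIntegral]
  linarith

end polyIntegral

noncomputable def rodriguesPoly (n : ℕ) : ℝ[X] := C ((2 ^ n * n ! : ℝ)⁻¹) * (X ^ 2 - 1) ^ n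

section Legendre

variable {n : ℕ}

theorem legendre_eq_iterate_derivative_rodriguesPoly (n : ℕ) :
    legendre n = derivative^[n] (rodriguesPoly n) :=
  (iterate_derivative_C_mul _ _ _).symm

theorem inv_two_pow_mul_factorial_eq (n : ℕ) :
    (2 ^ n * n ! : ℝ)⁻¹ = (2 * n + 2) * (2 ^ (n + 1) * (n + 1)! : ℝ)⁻¹ := by
  rw [Nat.factorial_succ, pow_succ]
  push_cast
  field_simp

theorem derivative_rodriguesPoly_succ (n : ℕ) :
    derivative (rodriguesPoly (n + 1)) = X * rodriguesPoly n := by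
  simp only [rodriguesPoly, derivative_C_mul, derivative_pow, derivative_sub, derivative_one,
    derivative_X, inv_two_pow_mul_factorial_eq n, map_mul, map_add, map_natCast, map_ofNat,
    map_one, Nat.add_sub_cancel, Nat.cast_add, Nat.cast_one]
  ring

theorem X_sq_sub_one_mul_rodriguesPoly (n : ℕ) :
    (X ^ 2 - 1) * rodriguesPoly n = C (2 * n + 2 : ℝ) * rodriguesPoly (n + 1) := by
  simp only [rodriguesPoly, inv_two_pow_mul_factorial_eq n, map_mul]
  ring

theorem derivative_X_mul_rodriguesPoly_succ (n : ℕ) :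
    derivative (X * rodriguesPoly (n + 1)) =
      C (2 * n + 3 : ℝ) * rodriguesPoly (n + 1) + rodriguesPoly n := by
  have h := X_sq_sub_one_mul_rodriguesPoly n
  simp only [map_add, map_mul, map_natCast, map_ofNat] at h ⊢
  rw [derivative_mul, derivative_X, derivative_rodriguesPoly_succ]
  linear_combination h

theorem eval_iterate_derivative_rodriguesPoly {k : ℕ} (hk : k < n) :
    (derivative^[k] (rodriguesPoly n)).eval (-1) = 0 ∧
      (derivative^[k] (rodriguesPoly n)).eval 1 = 0 :=
  ⟨eval_iterate_derivative_eq_zero_of_pow_dvd (dvd_mul_left _ _) (by simp) hk,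
    eval_iterate_derivative_eq_zero_of_pow_dvd (dvd_mul_left _ _) (by simp) hk⟩

theorem polyIntegral_mul_legendre (q : ℝ[X]) (n : ℕ) :
    polyIntegral (-1) 1 (q * legendre n) =
      (-1) ^ n * polyIntegral (-1) 1 (derivative^[n] q * rodriguesPoly n) := by
  rw [legendre_eq_iterate_derivative_rodriguesPoly]
  exact polyIntegral_mul_iterate_derivative (fun k hk ↦ eval_iterate_derivative_rodriguesPoly hk) q

theorem polyIntegral_mul_legendre_eq_zero {q : ℝ[X]} (hq : q.natDegree < n) :
    polyIntegral (-1) 1 (q * legendre n) = 0 := by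
  rw [polyIntegral_mul_legendre, iterate_derivative_eq_zero hq, zero_mul]
  simp [polyIntegral]

theorem polyIntegral_rodriguesPoly_succ (n : ℕ) :
    (2 * n + 3) * polyIntegral (-1) 1 (rodriguesPoly (n + 1)) =
      -polyIntegral (-1) 1 (rodriguesPoly n) := by
  have h := polyIntegral_derivative (a := -1) (b := 1) (X * rodriguesPoly (n + 1))
  obtain ⟨hl, hr⟩ := eval_iterate_derivative_rodriguesPoly (k := 0) n.succ_pos
  rw [derivative_X_mul_rodriguesPoly_succ, polyIntegral_add, polyIntegral_C_mul, eval_mul,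
    eval_mul] at h
  simp only [Function.iterate_zero_apply] at hl hr
  rw [hl, hr] at h
  linarith

theorem polyIntegral_rodriguesPoly (n : ℕ) :
    polyIntegral (-1) 1 (rodriguesPoly n) = (-1) ^ n * 2 ^ (n + 1) * n ! / (2 * n + 1)! := by
  induction n with
  | zero => norm_num [rodriguesPoly, polyIntegral]
  | succ n ih =>
    have h := polyIntegral_rodriguesPoly_succ n
    rw [ih] at h
    rw [show 2 * (n + 1) + 1 = (2 * n + 1) + 1 + 1 by ring,
      Nat.factorial_succ, Nat.factorial_succ, Nat.factorial_succ]
    push_cast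
    field_simp at h ⊢
    linear_combination (2 * (n : ℝ) + 2) * h

theorem natDegree_X_sq_sub_one : (X ^ 2 - 1 : ℝ[X]).natDegree = 2 := by
  simpa using natDegree_X_pow_sub_C (n := 2) (r := (1 : ℝ))

theorem natDegree_rodriguesPoly_le (n : ℕ) : (rodriguesPoly n).natDegree ≤ 2 * n := by
  refine (natDegree_C_mul_le _ _).trans (natDegree_pow_le.trans ?_)
  rw [natDegree_X_sq_sub_one, mul_comm]

theorem coeff_rodriguesPoly_two_mul (n : ℕ) :
    (rodriguesPoly n).coeff (2 * n) = (2 ^ n * n ! : ℝ)⁻¹ := by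
  rw [rodriguesPoly, coeff_C_mul, mul_comm 2 n,
    coeff_pow_of_natDegree_le natDegree_X_sq_sub_one.le]
  simp [coeff_one]

theorem natDegree_legendre_le (n : ℕ) : (legendre n).natDegree ≤ n := by
  rw [legendre_eq_iterate_derivative_rodriguesPoly]
  exact (natDegree_iterate_derivative _ _).trans (by have := natDegree_rodriguesPoly_le n; omega)

theorem iterate_derivative_legendre_self (n : ℕ) :
    derivative^[n] (legendre n) = C ((2 * n)! * (2 ^ n * n ! : ℝ)⁻¹) := by
  rw [legendre_eq_iterate_derivative_rodriguesPoly, ← Function.iterate_add_apply, ← two_mul,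
    iterate_derivative_eq_C_of_natDegree_le (natDegree_rodriguesPoly_le n),
    coeff_rodriguesPoly_two_mul]

theorem polyIntegral_legendre_mul_self (n : ℕ) :
    polyIntegral (-1) 1 (legendre n * legendre n) = 2 / (2 * n + 1) := by
  rw [polyIntegral_mul_legendre, iterate_derivative_legendre_self, polyIntegral_C_mul,
    polyIntegral_rodriguesPoly, Nat.factorial_succ]
  have hsq : ((-1 : ℝ) ^ n) ^ 2 = 1 := by simp [← pow_mul]
  push_cast
  field_simp
  rw [hsq, pow_succ, one_mul]

theorem legendre_comp_neg_X (n : ℕ) : (legendre n).comp (-X) = (-1) ^ n * legendre n := by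
  have h := iterate_derivative_comp_neg_X (rodriguesPoly n) n
  rw [show (rodriguesPoly n).comp (-X) = rodriguesPoly n by simp [rodriguesPoly],
    ← legendre_eq_iterate_derivative_rodriguesPoly] at h
  have hsq : ((-1 : ℝ[X]) ^ n) ^ 2 = 1 := by simp [← pow_mul]
  linear_combination (-(legendre n).comp (-X)) * hsq - (-1) ^ n * h

theorem polyIntegral_X_mul_legendre_mul_self (n : ℕ) :
    polyIntegral (-1) 1 (X * (legendre n * legendre n)) = 0 := by
  refine polyIntegral_neg_eq_zero_of_comp_neg_X ?_ 1
  have hsq : ((-1 : ℝ[X]) ^ n) ^ 2 = 1 := by simp [← pow_mul]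
  rw [mul_comp, mul_comp, X_comp, legendre_comp_neg_X]
  linear_combination (-X * (legendre n * legendre n)) * hsq

theorem derivative_legendre_add_two (n : ℕ) :
    derivative (legendre (n + 2)) =
      C (2 * n + 3 : ℝ) * legendre (n + 1) + derivative (legendre n) := by
  simp only [legendre_eq_iterate_derivative_rodriguesPoly]
  rw [← Function.iterate_succ_apply' derivative (n + 2), Function.iterate_succ_apply,
    Function.iterate_succ_apply, derivative_rodriguesPoly_succ,
    derivative_X_mul_rodriguesPoly_succ, iterate_map_add, iterate_derivative_C_mul,
    Function.iterate_succ_apply', Function.iterate_succ_apply']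

theorem coeff_legendre_add_two (n : ℕ) :
    (n + 2) * (legendre (n + 2)).coeff (n + 2) =
      (2 * n + 3) * (legendre (n + 1)).coeff (n + 1) := by
  have h := congrArg (coeff · (n + 1)) (derivative_legendre_add_two n)
  simp only [coeff_derivative, coeff_add, coeff_C_mul] at h
  rw [coeff_eq_zero_of_natDegree_lt ((natDegree_legendre_le n).trans_lt (by omega)), zero_mul,
    add_zero] at h
  push_cast at h
  linear_combination h

theorem natDegree_X_mul_legendre_sub_le (n : ℕ) :
    (X * legendre (n + 1) - C ((n + 2) / (2 * n + 3) : ℝ) * legendre (n + 2)).natDegree ≤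
      n + 1 := by
  rw [natDegree_le_iff_coeff_eq_zero]
  intro m hm
  obtain rfl | hm := (Nat.succ_le_of_lt hm).eq_or_lt
  · rw [coeff_sub, coeff_X_mul, coeff_C_mul]
    have h := coeff_legendre_add_two n
    field_simp
    linear_combination -h
  · rw [coeff_eq_zero_of_natDegree_lt]
    refine (natDegree_sub_le _ _).trans_lt (max_lt ?_ ?_)
    · have := natDegree_legendre_le (n + 1)
      exact natDegree_mul_le.trans_lt (by rw [natDegree_X]; omega)
    · exact (natDegree_C_mul_le _ _).trans_lt ((natDegree_legendre_le _).trans_lt hm)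

theorem polyIntegral_X_mul_legendre_mul_legendre_succ (n : ℕ) :
    polyIntegral (-1) 1 (X * (legendre (n + 1) * legendre (n + 2))) =
      (n + 2) / (2 * n + 3) * (2 / (2 * n + 5)) := by
  set r := X * legendre (n + 1) - C ((n + 2) / (2 * n + 3) : ℝ) * legendre (n + 2)
  have hsplit : X * (legendre (n + 1) * legendre (n + 2)) =
      C ((n + 2) / (2 * n + 3) : ℝ) * (legendre (n + 2) * legendre (n + 2)) +
        r * legendre (n + 2) := by
    ring
  rw [hsplit, polyIntegral_add, polyIntegral_C_mul, polyIntegral_legendre_mul_self,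
    polyIntegral_mul_legendre_eq_zero ((natDegree_X_mul_legendre_sub_le n).trans_lt (by omega))]
  push_cast
  ring

end Legendre

theorem derivative_chi (i : ℕ) : derivative (chi i) = -C (2 * i + 3 : ℝ) * legendre (i + 1) := by
  rw [chi, derivative_sub, derivative_legendre_add_two]
  ring

theorem aMat_eq (i j : ℕ) :
    aMat i j = (2 * i + 3) * (2 * j + 3) *
      polyIntegral (-1) 1 (legendre (i + 1) * legendre (j + 1) * (X + 1)) := by
  rw [← polyIntegral_C_mul, aMat, polyIntegral]
  congr 1 with x
  simp only [derivative_chi, eval_mul, eval_neg, eval_C, eval_add, eval_X, eval_one, map_mul]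
  ring

theorem polyIntegral_legendre_mul_legendre_mul_X_add_one_of_add_two_le {m n : ℕ}
    (h : m + 2 ≤ n) : polyIntegral (-1) 1 (legendre m * legendre n * (X + 1)) = 0 := by
  have hdeg : (X + 1 : ℝ[X]).natDegree = 1 := by simpa using natDegree_X_add_C (1 : ℝ)
  rw [mul_right_comm]
  refine polyIntegral_mul_legendre_eq_zero (natDegree_mul_le.trans_lt ?_)
  have := natDegree_legendre_le m
  omega

theorem stiffness_entries (i j : ℕ) :
    aMat i i = 4 * (i : ℝ) + 6 ∧
    aMat i (i + 1) = 2 * (i : ℝ) + 4 ∧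
    (2 ≤ |(i : ℤ) - (j : ℤ)| → aMat i j = 0) := by
  refine ⟨?_, ?_, fun hij ↦ ?_⟩
  · rw [aMat_eq, polyIntegral_mul_X_add_one, polyIntegral_X_mul_legendre_mul_self,
      polyIntegral_legendre_mul_self]
    push_cast
    field_simp
    ring
  · rw [aMat_eq, polyIntegral_mul_X_add_one, polyIntegral_X_mul_legendre_mul_legendre_succ,
      polyIntegral_mul_legendre_eq_zero ((natDegree_legendre_le _).trans_lt (by omega))]
    push_cast
    field_simp
    ring
  · rw [aMat_eq]
    rcases le_abs.mp hij with h | h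
    · rw [mul_comm (legendre _),
        polyIntegral_legendre_mul_legendre_mul_X_add_one_of_add_two_le (by omega), mul_zero]
    · rw [polyIntegral_legendre_mul_legendre_mul_X_add_one_of_add_two_le (by omega), mul_zero]
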